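/- Every tempered distribution on ℝ^n supported at the origin is a finite linear combination of partial derivatives ∂^I δ_0 of the Dirac delta at 0, where I ranges over multi-indices in ℕ^n. -/

import Mathlib

/-!
Continuity of `η` bounds `‖η g‖` by finitely many Schwartz seminorms, which involve derivatives
of some bounded order `k`. Suppose every derivative of `f` of order at most `k` vanishes at `0`.
Then Taylor's theorem gives `‖D^j f x‖ ≤ M ‖x‖ ^ (k + 1 - j)`, and multiplying `f` by a cutoff
`χ (x / ε)` does not change `η f`, since `η` is supported at `0`. By the Leibniz rule, the
seminorms that control `η` are `O(ε)` on these products, so `η f = 0`. Thus `η` vanishes on the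
common kernel of the finitely many functionals `∂^I δ₀` with `I ≤ k`, and a linear form that
vanishes on the intersection of finitely many kernels is a linear combination of them.
-/

open SchwartzMap

/-- The iterated partial-derivative operator `∂^I` on Schwartz functions on `ℝ^n`,
for a multi-index `I ∈ ℕ^n`. -/
noncomputable def partialMulti (n : ℕ) (I : Fin n → ℕ) :
    𝓢((Fin n → ℝ), ℂ) →L[ℂ] 𝓢((Fin n → ℝ), ℂ) :=
  (List.ofFn fun i : Fin n => (LineDeriv.lineDerivOpCLM ℂ 𝓢((Fin n → ℝ), ℂ) (Pi.single i 1 : Fin n → ℝ)) ^ (I i)).prod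

/-- The tempered distribution `∂^I δ₀ : f ↦ (-1)^{|I|} (∂^I f)(0)` on `ℝ^n`. -/
noncomputable def deltaDeriv (n : ℕ) (I : Fin n → ℕ) : 𝓢((Fin n → ℝ), ℂ) →L[ℂ] ℂ :=
  ((-1 : ℂ) ^ (∑ i, I i)) • ((BoundedContinuousFunction.evalCLM ℂ (0 : Fin n → ℝ)).comp
      (SchwartzMap.toBoundedContinuousFunctionCLM ℂ (Fin n → ℝ) ℂ)).comp (partialMulti n I)

open LineDeriv Metric Filter Topology
open scoped ContDiff

theorem List.perm_flatten_ofFn_replicate_count {n : ℕ} (l : List (Fin n)) :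
    l.Perm (List.ofFn fun i => List.replicate (l.count i) i).flatten := by
  rw [List.perm_iff_count]
  intro a
  simp [List.count_flatten, List.sum_ofFn, List.count_replicate]

theorem List.prod_map_eq_prod_ofFn_pow_count {M : Type*} [Monoid M] {n : ℕ} {D : Fin n → M}
    (hD : ∀ i j, Commute (D i) (D j)) (l : List (Fin n)) :
    (l.map D).prod = (List.ofFn fun i => D i ^ l.count i).prod := by
  rw [((List.perm_flatten_ofFn_replicate_count l).map D).prod_eq'
    (List.pairwise_map.2 (List.pairwise_of_forall_mem_list fun a _ b _ => hD a b))]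
  simp [List.map_flatten, List.prod_flatten, List.map_ofFn, Function.comp_def]

theorem ContinuousLinearMap.mem_span_of_iInf_ker_le_ker {ι 𝕜 E : Type*} [Fintype ι] [Field 𝕜]
    [TopologicalSpace 𝕜] [IsTopologicalRing 𝕜] [AddCommGroup E] [Module 𝕜 E] [TopologicalSpace E]
    {L : ι → E →L[𝕜] 𝕜} {K : E →L[𝕜] 𝕜}
    (h : ⨅ i, LinearMap.ker (L i : E →ₗ[𝕜] 𝕜) ≤ LinearMap.ker (K : E →ₗ[𝕜] 𝕜)) :
    K ∈ Submodule.span 𝕜 (Set.range L) := by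
  obtain ⟨c, hc⟩ := (Submodule.mem_span_range_iff_exists_fun 𝕜).1 <|
    _root_.mem_span_of_iInf_ker_le_ker (L := fun i => (L i : E →ₗ[𝕜] 𝕜)) h
  have hK : ∑ i, c i • L i = K := ContinuousLinearMap.coe_injective <| by
    rw [ContinuousLinearMap.toLinearMap_sum, ← hc]
    simp only [ContinuousLinearMap.toLinearMap_smul]
  exact hK ▸ Submodule.sum_mem _ fun i _ => Submodule.smul_mem _ _ (Submodule.subset_span ⟨i, rfl⟩)

theorem LineDeriv.iteratedLineDerivOpCLM_eq_prod {R V E : Type*} [Ring R] [AddCommGroup V]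
    [AddCommGroup E] [Module R E] [TopologicalSpace E] [LineDeriv V E E] [LineDerivAdd V E E]
    [LineDerivSMul R V E E] [ContinuousLineDeriv V E E] {k : ℕ} (m : Fin k → V) :
    iteratedLineDerivOpCLM R E m = (List.ofFn fun a => lineDerivOpCLM R E (m a)).prod := by
  induction k with
  | zero => rfl
  | succ k ih =>
    ext1 f
    rw [List.ofFn_succ, List.prod_cons, mul_apply_eq_comp, ← ih]
    rfl

namespace SchwartzMap

variable {E F : Type*} [NormedAddCommGroup E] [NormedSpace ℝ E] [NormedAddCommGroup F]
  [NormedSpace ℝ F]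

theorem lineDerivOp_comm (v w : E) (f : 𝓢(E, F)) : ∂_{v} (∂_{w} f) = ∂_{w} (∂_{v} f) := by
  ext x
  have h (v w : E) : ∂_{v} (∂_{w} f) x = fderiv ℝ (fderiv ℝ f) x v w :=
    (iteratedLineDerivOp_eq_iteratedFDeriv (m := ![v, w])).trans
      (iteratedFDeriv_two_apply f x ![v, w])
  rw [h, h, (f.smooth 2).contDiffAt.isSymmSndFDerivAt
    (by simp [minSmoothness_of_isRCLikeNormedField])]

end SchwartzMap

section PartialDerivatives

variable {n : ℕ}

theorem prod_map_lineDerivOpCLM_single_eq_partialMulti (l : List (Fin n)) :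
    (l.map fun i => lineDerivOpCLM ℂ 𝓢((Fin n → ℝ), ℂ) (Pi.single i 1 : Fin n → ℝ)).prod =
      partialMulti n fun i => l.count i :=
  List.prod_map_eq_prod_ofFn_pow_count
    (fun _ _ => ContinuousLinearMap.ext (lineDerivOp_comm _ _)) l

theorem iteratedFDeriv_zero_eq_zero_of_partialMulti {k : ℕ} {f : 𝓢((Fin n → ℝ), ℂ)}
    (hf : ∀ I : Fin n → ℕ, (∀ i, I i ≤ k) → partialMulti n I f 0 = 0) {j : ℕ} (hj : j ≤ k) :
    iteratedFDeriv ℝ j f 0 = 0 := by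
  apply ContinuousMultilinearMap.toMultilinearMap_injective
  refine Module.Basis.ext_multilinear (fun _ => Pi.basisFun ℝ (Fin n)) fun c => ?_
  have hc : iteratedFDeriv ℝ j f 0 (fun a => Pi.basisFun ℝ (Fin n) (c a)) =
      partialMulti n (fun i => (List.ofFn c).count i) f 0 := by
    rw [← iteratedLineDerivOp_eq_iteratedFDeriv, ← iteratedLineDerivOpCLM_apply (R := ℂ),
      iteratedLineDerivOpCLM_eq_prod, ← prod_map_lineDerivOpCLM_single_eq_partialMulti,
      List.map_ofFn]
    simp only [Pi.basisFun_apply, Function.comp_def]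
  exact hc.trans (hf _ fun i => List.count_le_length.trans (by simpa using hj))

end PartialDerivatives

section Taylor

variable {E F : Type*} [NormedAddCommGroup E] [NormedSpace ℝ E] [NormedAddCommGroup F]
  [NormedSpace ℝ F]

theorem norm_iteratedFDeriv_le_of_iteratedFDeriv_zero_eq_zero {f : E → F} {k : ℕ}
    (hf : ContDiff ℝ (k + 1) f) {M : ℝ} (hM : ∀ x, ‖iteratedFDeriv ℝ (k + 1) f x‖ ≤ M)
    (h0 : ∀ j ≤ k, iteratedFDeriv ℝ j f 0 = 0) {j : ℕ} (hj : j ≤ k + 1) (x : E) :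
    ‖iteratedFDeriv ℝ j f x‖ ≤ M * ‖x‖ ^ (k + 1 - j) := by
  induction hd : k + 1 - j generalizing j x with
  | zero =>
    obtain rfl : j = k + 1 := by omega
    simpa using hM x
  | succ d ih =>
    have hM0 : 0 ≤ M := (norm_nonneg _).trans (hM 0)
    have hderiv : ∀ y ∈ closedBall (0 : E) ‖x‖,
        ‖fderiv ℝ (iteratedFDeriv ℝ j f) y‖ ≤ M * ‖x‖ ^ d := fun y hy => by
      rw [norm_fderiv_iteratedFDeriv]
      refine (ih (by omega) y (by omega)).trans ?_
      gcongr
      simpa using hy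
    have hdiff : ∀ y ∈ closedBall (0 : E) ‖x‖, DifferentiableAt ℝ (iteratedFDeriv ℝ j f) y :=
      fun y _ => (hf.differentiable_iteratedFDeriv (by exact_mod_cast (by omega : j < k + 1))) y
    have hmvt := (convex_closedBall (0 : E) ‖x‖).norm_image_sub_le_of_norm_fderiv_le hdiff hderiv
      (mem_closedBall_self (norm_nonneg x)) (mem_closedBall_zero_iff.2 le_rfl)
    rw [h0 j (by omega), sub_zero, sub_zero] at hmvt
    exact hmvt.trans_eq (by ring)

end Taylor

section Cutoff

variable (E : Type*) [NormedAddCommGroup E] [NormedSpace ℝ E] [FiniteDimensional ℝ E]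

noncomputable def scaledBump (ε : ℝ) (x : E) : ℝ :=
  (⟨1, 2, one_pos, one_lt_two⟩ : ContDiffBump (0 : E)) (ε⁻¹ • x)

theorem contDiff_scaledBump (ε : ℝ) : ContDiff ℝ ∞ (scaledBump E ε) :=
  (ContDiffBump.contDiff _).comp (contDiff_const_smul ε⁻¹)

theorem exists_norm_iteratedFDeriv_scaledBump_le (i : ℕ) :
    ∃ B, 0 ≤ B ∧ ∀ ε > 0, ∀ x, ‖iteratedFDeriv ℝ i (scaledBump E ε) x‖ ≤ B * ε⁻¹ ^ i := by
  set χ : ContDiffBump (0 : E) := ⟨1, 2, one_pos, one_lt_two⟩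
  obtain ⟨B, hB⟩ := (χ.hasCompactSupport.iteratedFDeriv i).exists_bound_of_continuous
    (χ.contDiff.continuous_iteratedFDeriv (mod_cast le_top))
  refine ⟨B, (norm_nonneg _).trans (hB 0), fun ε hε x => ?_⟩
  change ‖iteratedFDeriv ℝ i (fun x => χ (ε⁻¹ • x)) x‖ ≤ _
  rw [iteratedFDeriv_comp_const_smul _ χ.contDiff, norm_smul, norm_pow,
    Real.norm_of_nonneg (by positivity), mul_comm]
  gcongr
  exact hB _

variable {E}

theorem scaledBump_eq_one_of_norm_le {ε : ℝ} (hε : 0 < ε) {x : E} (hx : ‖x‖ ≤ ε) :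
    scaledBump E ε x = 1 := by
  refine ContDiffBump.one_of_mem_closedBall _ ?_
  rw [mem_closedBall_zero_iff, norm_smul, Real.norm_of_nonneg (by positivity)]
  exact inv_mul_le_one_of_le₀ hx hε.le

theorem scaledBump_eq_zero_of_le_norm {ε : ℝ} (hε : 0 < ε) {x : E} (hx : 2 * ε ≤ ‖x‖) :
    scaledBump E ε x = 0 := by
  refine ContDiffBump.zero_of_le_dist _ ?_
  rw [dist_zero_right, norm_smul, Real.norm_of_nonneg (by positivity)]
  exact (le_inv_mul_iff₀ hε).2 (by simpa [mul_comm] using hx)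

theorem tsupport_scaledBump_subset {ε : ℝ} (hε : 0 < ε) :
    tsupport (scaledBump E ε) ⊆ closedBall 0 (2 * ε) := by
  refine closure_minimal (fun x hx => ?_) isClosed_closedBall
  by_contra h
  rw [mem_closedBall_zero_iff, not_le] at h
  exact hx (scaledBump_eq_zero_of_le_norm hε h.le)

theorem hasTemperateGrowth_scaledBump {ε : ℝ} (hε : 0 < ε) :
    (scaledBump E ε).HasTemperateGrowth :=
  HasCompactSupport.hasTemperateGrowth
    ((isCompact_closedBall 0 _).of_isClosed_subset (isClosed_tsupport _)
      (tsupport_scaledBump_subset hε))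
    (contDiff_scaledBump E ε)

end Cutoff

section Leibniz

variable {E F : Type*} [NormedAddCommGroup E] [NormedSpace ℝ E] [NormedAddCommGroup F]
  [NormedSpace ℝ F]

theorem norm_iteratedFDeriv_smul_le_of_scaling {χ : E → ℝ} {f : E → F} (hχ : ContDiff ℝ ∞ χ)
    (hf : ContDiff ℝ ∞ f) {ε M : ℝ} {B : ℕ → ℝ} {k j : ℕ} (hj : j ≤ k) (hε : 0 < ε)
    (hε1 : ε ≤ 1) (hM : 0 ≤ M) (hB : ∀ i, 0 ≤ B i) {x : E}
    (hχx : ∀ i, ‖iteratedFDeriv ℝ i χ x‖ ≤ B i * ε⁻¹ ^ i)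
    (hfx : ∀ i ≤ j, ‖iteratedFDeriv ℝ i f x‖ ≤ M * (2 * ε) ^ (k + 1 - i)) :
    ‖iteratedFDeriv ℝ j (fun y => χ y • f y) x‖ ≤
      (∑ i ∈ Finset.range (j + 1), j.choose i * B i) * M * 2 ^ (k + 1) * ε := by
  refine (norm_iteratedFDeriv_smul_le hχ hf x (mod_cast le_top)).trans ?_
  rw [Finset.sum_mul, Finset.sum_mul, Finset.sum_mul]
  refine Finset.sum_le_sum fun i hi => ?_
  have hij : i ≤ j := Finset.mem_range_succ_iff.1 hi
  have hBi := hB i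
  have hexp : k + 1 - (j - i) = k - j + 1 + i := by omega
  have hscale : ε⁻¹ ^ i * (2 * ε) ^ (k + 1 - (j - i)) ≤ 2 ^ (k + 1) * ε :=
    calc ε⁻¹ ^ i * (2 * ε) ^ (k + 1 - (j - i))
        = 2 ^ (k - j + 1 + i) * ε ^ (k - j + 1) := by
          have hinv : ε⁻¹ ^ i * ε ^ i = 1 := by rw [← mul_pow, inv_mul_cancel₀ hε.ne', one_pow]
          rw [hexp, mul_pow, pow_add ε]
          linear_combination (2 ^ (k - j + 1 + i) * ε ^ (k - j + 1)) * hinv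
      _ ≤ 2 ^ (k + 1) * ε :=
          mul_le_mul (pow_le_pow_right₀ (by norm_num) (by omega))
            (pow_le_of_le_one hε.le hε1 (by omega)) (by positivity) (by positivity)
  calc (j.choose i : ℝ) * ‖iteratedFDeriv ℝ i χ x‖ * ‖iteratedFDeriv ℝ (j - i) f x‖
      ≤ j.choose i * (B i * ε⁻¹ ^ i) * (M * (2 * ε) ^ (k + 1 - (j - i))) := by
        gcongr
        exacts [hχx i, hfx _ (Nat.sub_le j i)]
    _ = j.choose i * B i * M * (ε⁻¹ ^ i * (2 * ε) ^ (k + 1 - (j - i))) := by ring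
    _ ≤ j.choose i * B i * M * (2 ^ (k + 1) * ε) := by gcongr
    _ = j.choose i * B i * M * 2 ^ (k + 1) * ε := by ring

end Leibniz

namespace SchwartzMap

variable {E F G : Type*} [NormedAddCommGroup E] [NormedSpace ℝ E] [FiniteDimensional ℝ E]
  [NormedAddCommGroup F] [NormedSpace ℝ F] [NormedAddCommGroup G] [NormedSpace ℝ G]

theorem map_smulLeftCLM_scaledBump {η : 𝓢(E, F) →L[ℝ] G}
    (hη : ∀ f : 𝓢(E, F), (0 : E) ∉ tsupport f → η f = 0) (f : 𝓢(E, F)) {ε : ℝ} (hε : 0 < ε) :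
    η (smulLeftCLM F (scaledBump E ε) f) = η f := by
  rw [← sub_eq_zero, ← map_sub]
  refine hη _ (notMem_tsupport_iff_eventuallyEq.2 ?_)
  filter_upwards [closedBall_mem_nhds (0 : E) hε] with x hx
  simp [smulLeftCLM_apply_apply (hasTemperateGrowth_scaledBump hε),
    scaledBump_eq_one_of_norm_le hε (mem_closedBall_zero_iff.1 hx)]

theorem tendsto_seminorm_smulLeftCLM_scaledBump {k : ℕ} {f : 𝓢(E, F)}
    (hf : ∀ j ≤ k, iteratedFDeriv ℝ j f 0 = 0) (m : ℕ) {j : ℕ} (hj : j ≤ k) :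
    Tendsto (fun ε => SchwartzMap.seminorm ℝ m j (smulLeftCLM F (scaledBump E ε) f))
      (𝓝[>] 0) (𝓝 0) := by
  choose B hB0 hB using exists_norm_iteratedFDeriv_scaledBump_le E
  set M := SchwartzMap.seminorm ℝ 0 (k + 1) f
  have hTaylor : ∀ i ≤ k + 1, ∀ x, ‖iteratedFDeriv ℝ i f x‖ ≤ M * ‖x‖ ^ (k + 1 - i) :=
    fun i hi => norm_iteratedFDeriv_le_of_iteratedFDeriv_zero_eq_zero (f.smooth (k + 1))
      (norm_iteratedFDeriv_le_seminorm ℝ f (k + 1)) hf hi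
  set K := (∑ i ∈ Finset.range (j + 1), j.choose i * B i) * M * 2 ^ (k + 1)
  have hK : Tendsto (fun ε : ℝ => K * ε) (𝓝[>] 0) (𝓝 0) := by
    simpa using tendsto_nhdsWithin_of_tendsto_nhds ((continuous_const_mul K).tendsto 0)
  refine squeeze_zero' (Eventually.of_forall fun _ => apply_nonneg _ _) ?_ hK
  filter_upwards [Ioc_mem_nhdsGT (by norm_num : (0 : ℝ) < 1 / 2)] with ε ⟨hε, hε2⟩
  have hK0 : 0 ≤ K := mul_nonneg (mul_nonneg (Finset.sum_nonneg fun i _ =>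
    mul_nonneg (Nat.cast_nonneg _) (hB0 i)) (apply_nonneg _ _)) (by positivity)
  refine seminorm_le_bound ℝ m j _ (by positivity) fun x => ?_
  rw [smulLeftCLM_apply (hasTemperateGrowth_scaledBump hε)]
  by_cases hx : ‖x‖ ≤ 2 * ε
  · have hx1 : ‖x‖ ≤ 1 := by linarith
    calc ‖x‖ ^ m * ‖iteratedFDeriv ℝ j (fun y => scaledBump E ε y • f y) x‖
        ≤ 1 * ‖iteratedFDeriv ℝ j (fun y => scaledBump E ε y • f y) x‖ := by
          gcongr
          exact pow_le_one₀ (norm_nonneg x) hx1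
      _ ≤ K * ε := by
          rw [one_mul]
          refine norm_iteratedFDeriv_smul_le_of_scaling (contDiff_scaledBump E ε) (f.smooth ⊤)
            hj hε (by linarith) (apply_nonneg _ _) hB0 (fun i => hB i ε hε x) fun i hi => ?_
          exact (hTaylor i (by omega) x).trans (by gcongr)
  · have hsupp : x ∉ tsupport fun y => scaledBump E ε y • f y := fun hmem => hx <|
      mem_closedBall_zero_iff.1 (tsupport_scaledBump_subset hε (tsupport_smul_subset_left _ _ hmem))
    rw [Function.notMem_support.1 fun h => hsupp (support_iteratedFDeriv_subset j h)]
    simp only [norm_zero, mul_zero]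
    positivity

theorem exists_map_eq_zero_of_iteratedFDeriv_eq_zero (η : 𝓢(E, F) →L[ℝ] G)
    (hη : ∀ f : 𝓢(E, F), (0 : E) ∉ tsupport f → η f = 0) :
    ∃ k, ∀ f : 𝓢(E, F), (∀ j ≤ k, iteratedFDeriv ℝ j f 0 = 0) → η f = 0 := by
  obtain ⟨s, C, -, hC⟩ := Seminorm.bound_of_continuous (schwartz_withSeminorms ℝ E F)
    ((normSeminorm ℝ G).comp η.toLinearMap) (continuous_norm.comp η.continuous)
  refine ⟨s.sup Prod.snd, fun f hf => ?_⟩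
  set g : ℝ → 𝓢(E, F) := fun ε => smulLeftCLM F (scaledBump E ε) f
  have hbound : ∀ ε > 0, ‖η f‖ ≤ C * ∑ i ∈ s, SchwartzMap.seminorm ℝ i.1 i.2 (g ε) := by
    intro ε hε
    rw [← map_smulLeftCLM_scaledBump hη f hε]
    refine (hC _).trans ?_
    simp only [smul_apply, NNReal.smul_def, smul_eq_mul]
    gcongr
    exact Seminorm.finset_sup_apply_le (Finset.sum_nonneg fun i _ => apply_nonneg _ _)
      fun i hi => Finset.single_le_sum (fun j _ => apply_nonneg _ _) hi
  have hlim : Tendsto (fun ε => C * ∑ i ∈ s, SchwartzMap.seminorm ℝ i.1 i.2 (g ε))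
      (𝓝[>] 0) (𝓝 0) := by
    simpa only [Finset.sum_const_zero, mul_zero] using (tendsto_finsetSum s fun i hi =>
      tendsto_seminorm_smulLeftCLM_scaledBump hf i.1 (Finset.le_sup hi)).const_mul (C : ℝ)
  exact norm_le_zero_iff.1 (ge_of_tendsto hlim (eventually_nhdsWithin_of_forall hbound))

end SchwartzMap

/-- Every tempered distribution on `ℝ^n` supported at the origin is a finite linear
combination of the distributions `∂^I δ₀`. -/
theorem stmt2 (n : ℕ) (η : 𝓢((Fin n → ℝ), ℂ) →L[ℂ] ℂ)
    (hsupp : ∀ f : 𝓢((Fin n → ℝ), ℂ), (0 : Fin n → ℝ) ∉ tsupport f → η f = 0) :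
    η ∈ Submodule.span ℂ (Set.range (deltaDeriv n)) := by
  obtain ⟨k, hk⟩ :=
    SchwartzMap.exists_map_eq_zero_of_iteratedFDeriv_eq_zero (η.restrictScalars ℝ) hsupp
  have hker : ⨅ I : Fin n → Fin (k + 1),
      LinearMap.ker (deltaDeriv n (fun i => I i) : 𝓢((Fin n → ℝ), ℂ) →ₗ[ℂ] ℂ) ≤
        LinearMap.ker (η : 𝓢((Fin n → ℝ), ℂ) →ₗ[ℂ] ℂ) := by
    intro f hf
    simp only [Submodule.mem_iInf, LinearMap.mem_ker] at hf ⊢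
    refine hk f fun j hj => iteratedFDeriv_zero_eq_zero_of_partialMulti (fun I hI => ?_) hj
    simpa [deltaDeriv] using hf fun i => ⟨I i, Nat.lt_succ_of_le (hI i)⟩
  exact Submodule.span_mono (Set.range_comp_subset_range _ _)
    (ContinuousLinearMap.mem_span_of_iInf_ker_le_ker hker)
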